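/- In the Grigorchuk group action on X = {x,y}, with F_g^k = {v ∈ X^k : g·v = v, g|_v = e}: |F_d^k| = (2^{k+2} − 2^{k−(3j+1)})/7 for 3j+1 ≤ k ≤ 3j+3, and hence c_d = lim_k 2^{-k}|F_d^k| = 4/7; similarly c_c = 2/7, c_b = 1/7, and c_a = 0. -/

import Mathlib

/-- The generator `a` of the Grigorchuk group, acting on words over `X = {x,y}`
(encoded as `Bool` with `x = false`, `y = true`): `a·(xw) = yw`, `a·(yw) = xw`. -/
def grigA : List Bool → List Bool
  | [] => []
  | x :: w => (!x) :: w

mutual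
/-- The generator `b`: `b·(xw) = x(a·w)`, `b·(yw) = y(c·w)`. -/
def grigB : List Bool → List Bool
  | [] => []
  | false :: w => false :: grigA w
  | true :: w => true :: grigC w
/-- The generator `c`: `c·(xw) = x(a·w)`, `c·(yw) = y(d·w)`. -/
def grigC : List Bool → List Bool
  | [] => []
  | false :: w => false :: grigA w
  | true :: w => true :: grigD w
/-- The generator `d`: `d·(xw) = xw`, `d·(yw) = y(b·w)`. -/
def grigD : List Bool → List Bool
  | [] => []
  | false :: w => false :: w
  | true :: w => true :: grigB w
end

/-- The restriction `f|_x` of a (length- and prefix-preserving) transformation of words: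
`f|_x (w)` is the tail of `f (x :: w)`. -/
def restr (f : List Bool → List Bool) (x : Bool) : List Bool → List Bool :=
  fun w => (f (x :: w)).tail

/-- The restriction `f|_v` of a transformation of words to a word `v`. -/
def restrW : (List Bool → List Bool) → List Bool → (List Bool → List Bool)
  | f, [] => f
  | f, x :: v => restrW (restr f x) v

/-- `wordFixCard f k` is the cardinality `|F_f^k|` of the set
`F_f^k = {v ∈ X^k : f·v = v and f|_v = e}`. -/
noncomputable def wordFixCard (f : List Bool → List Bool) (k : ℕ) : ℕ :=
  Nat.card {v : List Bool // v.length = k ∧ f v = v ∧ restrW f v = id}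

open Filter

/-!
The generators `b`, `c`, `d` fix the first letter, so a fixed word of length `k + 1` for any of
them is a letter `x` followed by a fixed word of length `k` for the restriction at `x`. Since
`a` has no fixed words and every word is fixed by the identity, this gives
`|F_b^{k+1}| = |F_c^k|`, `|F_c^{k+1}| = |F_d^k|` and `|F_d^{k+1}| = 2^k + |F_b^k|`, hence
`|F_d^{k+3}| = 2^{k+2} + |F_d^k|`. Summing this geometric series from `|F_d^0| = 0`,
`|F_d^1| = 1`, `|F_d^2| = 2` gives `7 |F_d^k| = 2^{k+2} - 2^{(k+2) mod 3}`, and the limits of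
`2^{-k} |F_g^k|` follow, those for `c` and `b` being `1/2` and `1/4` of the one for `d`.
-/

instance finite_subtype_length_eq_and {α : Type*} [Finite α] (k : ℕ) (P : List α → Prop) :
    Finite {v : List α // v.length = k ∧ P v} :=
  ((List.finite_length_eq α k).subset fun _ hv => hv.1).to_subtype

def consLengthEquiv {α : Type*} (P : List α → Prop) (k : ℕ) :
    (Σ x : α, {w : List α // w.length = k ∧ P (x :: w)}) ≃
      {v : List α // v.length = k + 1 ∧ P v} where
  toFun | ⟨x, w, h⟩ => ⟨x :: w, by simpa using h⟩
  invFun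
    | ⟨x :: w, h⟩ => ⟨x, w, by simpa using h⟩
    | ⟨[], h⟩ => absurd h.1 (by simp)
  left_inv := by rintro ⟨x, w, h⟩; rfl
  right_inv := by rintro ⟨_ | ⟨x, w⟩, h⟩ <;> simp at h ⊢

theorem natCard_length_succ {α : Type*} [Fintype α] (P : List α → Prop) (k : ℕ) :
    Nat.card {v : List α // v.length = k + 1 ∧ P v} =
      ∑ x : α, Nat.card {w : List α // w.length = k ∧ P (x :: w)} := by
  rw [← Nat.card_congr (consLengthEquiv P k), Nat.card_sigma]

theorem restrW_cons (f : List Bool → List Bool) (x : Bool) (v : List Bool) :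
    restrW f (x :: v) = restrW (restr f x) v := rfl

theorem wordFixCard_succ_of_head_fixed {f : List Bool → List Bool}
    (hf : ∀ x w, f (x :: w) = x :: restr f x w) (k : ℕ) :
    wordFixCard f (k + 1) = wordFixCard (restr f false) k + wordFixCard (restr f true) k := by
  rw [wordFixCard, natCard_length_succ, Fintype.sum_bool, add_comm]
  simp only [hf, List.cons.injEq, true_and, restrW_cons]
  rfl

theorem wordFixCard_zero_of_ne_id {f : List Bool → List Bool} (hf : f ≠ id) :
    wordFixCard f 0 = 0 := by
  have : IsEmpty {v : List Bool // v.length = 0 ∧ f v = v ∧ restrW f v = id} :=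
    ⟨fun ⟨v, hlen, _, hid⟩ => hf (by rwa [List.length_eq_zero_iff.1 hlen] at hid)⟩
  exact Nat.card_of_isEmpty

theorem wordFixCard_id (k : ℕ) : wordFixCard id k = 2 ^ k := by
  induction k with
  | zero =>
    have : Unique {v : List Bool // v.length = 0 ∧ id v = v ∧ restrW id v = id} :=
      ⟨⟨⟨[], rfl, rfl, rfl⟩⟩, fun ⟨v, hlen, _⟩ => Subtype.ext (List.length_eq_zero_iff.1 hlen)⟩
    exact Nat.card_unique
  | succ k ih =>
    rw [wordFixCard_succ_of_head_fixed (fun _ _ => rfl), pow_succ, mul_two]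
    exact congrArg₂ _ ih ih

theorem wordFixCard_grigA (k : ℕ) : wordFixCard grigA k = 0 := by
  have : IsEmpty {v : List Bool // v.length = k ∧ grigA v = v ∧ restrW grigA v = id} := by
    refine ⟨fun ⟨v, _, hfix, hid⟩ => ?_⟩
    cases v with
    | nil => simpa [restrW, grigA] using congrFun hid [false]
    | cons x w => simp [grigA] at hfix
  exact Nat.card_of_isEmpty

theorem grigB_ne_id : grigB ≠ id := fun h => absurd (congrFun h [false, false]) (by decide)

theorem grigC_ne_id : grigC ≠ id := fun h => absurd (congrFun h [false, false]) (by decide)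

theorem grigD_ne_id : grigD ≠ id := fun h => absurd (congrFun h [true, false, false]) (by decide)

theorem wordFixCard_grigB_succ (k : ℕ) : wordFixCard grigB (k + 1) = wordFixCard grigC k := by
  rw [wordFixCard_succ_of_head_fixed (by rintro (_ | _) _ <;> rfl)]
  show wordFixCard grigA k + wordFixCard grigC k = _
  rw [wordFixCard_grigA, zero_add]

theorem wordFixCard_grigC_succ (k : ℕ) : wordFixCard grigC (k + 1) = wordFixCard grigD k := by
  rw [wordFixCard_succ_of_head_fixed (by rintro (_ | _) _ <;> rfl)]
  show wordFixCard grigA k + wordFixCard grigD k = _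
  rw [wordFixCard_grigA, zero_add]

theorem wordFixCard_grigD_succ (k : ℕ) :
    wordFixCard grigD (k + 1) = 2 ^ k + wordFixCard grigB k := by
  rw [wordFixCard_succ_of_head_fixed (by rintro (_ | _) _ <;> rfl)]
  show wordFixCard id k + wordFixCard grigB k = _
  rw [wordFixCard_id]

theorem wordFixCard_grigD_add_three (k : ℕ) :
    wordFixCard grigD (k + 3) = 2 ^ (k + 2) + wordFixCard grigD k := by
  rw [wordFixCard_grigD_succ, wordFixCard_grigB_succ, wordFixCard_grigC_succ]

theorem seven_mul_wordFixCard_grigD_add (k : ℕ) :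
    7 * wordFixCard grigD k + 2 ^ ((k + 2) % 3) = 2 ^ (k + 2) := by
  induction k using Nat.strong_induction_on with
  | _ k ih =>
    match k, ih with
    | 0, _ => simp [wordFixCard_zero_of_ne_id grigD_ne_id]
    | 1, _ => simp [wordFixCard_grigD_succ, wordFixCard_zero_of_ne_id grigB_ne_id]
    | 2, _ => simp [wordFixCard_grigD_succ, wordFixCard_grigB_succ,
        wordFixCard_zero_of_ne_id grigC_ne_id]
    | k + 3, ih =>
      rw [wordFixCard_grigD_add_three, show (k + 3 + 2) % 3 = (k + 2) % 3 by omega]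
      have hk := ih k (by omega)
      have h8 : 2 ^ (k + 3 + 2) = 8 * 2 ^ (k + 2) := by ring
      omega

theorem tendsto_wordFixCard_grigD :
    Tendsto (fun k => (wordFixCard grigD k : ℝ) / 2 ^ k) atTop (nhds (4 / 7)) := by
  have hclosed (k : ℕ) : (wordFixCard grigD k : ℝ) / 2 ^ k =
      4 / 7 - 2 ^ ((k + 2) % 3) / 7 * (1 / 2) ^ k := by
    have h := congrArg (Nat.cast : ℕ → ℝ) (seven_mul_wordFixCard_grigD_add k)
    push_cast at h
    rw [one_div_pow]
    field_simp
    linear_combination h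
  have herr : Tendsto (fun k : ℕ => (2 : ℝ) ^ ((k + 2) % 3) / 7 * (1 / 2) ^ k) atTop (nhds 0) := by
    have hgeom : Tendsto (fun k : ℕ => (4 / 7 : ℝ) * (1 / 2) ^ k) atTop (nhds 0) := by
      simpa using (tendsto_pow_atTop_nhds_zero_of_lt_one (r := (1 / 2 : ℝ))
        (by norm_num) (by norm_num)).const_mul (4 / 7)
    refine squeeze_zero (fun k => by positivity) (fun k => ?_) hgeom
    gcongr
    calc (2 : ℝ) ^ ((k + 2) % 3) ≤ 2 ^ 2 := pow_le_pow_right₀ (by norm_num) (by omega)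
      _ = 4 := by norm_num
  simpa [hclosed] using (tendsto_const_nhds (x := (4 / 7 : ℝ))).sub herr

theorem Filter.Tendsto.div_two_pow_of_succ {u v : ℕ → ℕ} {c : ℝ} (huv : ∀ k, u (k + 1) = v k)
    (hv : Tendsto (fun k => (v k : ℝ) / 2 ^ k) atTop (nhds c)) :
    Tendsto (fun k => (u k : ℝ) / 2 ^ k) atTop (nhds (c / 2)) := by
  rw [← tendsto_add_atTop_iff_nat 1]
  simpa [huv, pow_succ, div_mul_eq_div_div] using hv.div_const 2

/-- In the Grigorchuk group action on `X = {x,y}`: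
`|F_d^k| = (2^{k+2} − 2^{k−(3j+1)})/7` for `3j+1 ≤ k ≤ 3j+3`, hence
`c_d = lim 2^{-k}|F_d^k| = 4/7`; similarly `c_c = 2/7`, `c_b = 1/7`, `c_a = 0`. -/
theorem grigorchuk_Fd_counts :
    (∀ j k : ℕ, 3 * j + 1 ≤ k → k ≤ 3 * j + 3 →
      7 * wordFixCard grigD k = 2 ^ (k + 2) - 2 ^ (k - (3 * j + 1))) ∧
    Tendsto (fun k : ℕ => (wordFixCard grigD k : ℝ) / 2 ^ k) atTop (nhds (4 / 7)) ∧
    Tendsto (fun k : ℕ => (wordFixCard grigC k : ℝ) / 2 ^ k) atTop (nhds (2 / 7)) ∧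
    Tendsto (fun k : ℕ => (wordFixCard grigB k : ℝ) / 2 ^ k) atTop (nhds (1 / 7)) ∧
    Tendsto (fun k : ℕ => (wordFixCard grigA k : ℝ) / 2 ^ k) atTop (nhds 0) := by
  have hD := tendsto_wordFixCard_grigD
  have hC := hD.div_two_pow_of_succ wordFixCard_grigC_succ
  have hB := hC.div_two_pow_of_succ wordFixCard_grigB_succ
  norm_num at hC hB
  refine ⟨fun j k hlo hhi => ?_, hD, hC, hB, by simp [wordFixCard_grigA]⟩
  have hexp : k - (3 * j + 1) = (k + 2) % 3 := by omega
  rw [hexp]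
  have hclosed := seven_mul_wordFixCard_grigD_add k
  omega
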